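/- Let (X,d) be a metric space and S a bornology on X such that for every S₀ ∈ S and every positive function f : X → (0,∞), either B_d(S₀,f) ∈ S or the closure of B_d(S₀,f) equals X. Then τ⁺_{S,d}-convergence and G⁺_{S,d}-convergence coincide on the nonempty closed subsets of X. -/

import Mathlib

open Metric Filter

/-- The gap functional `D_d(S,A) = inf {d(s,a) : s ∈ S, a ∈ A}`. -/
noncomputable def gapD {X : Type*} [MetricSpace X] (S A : Set X) : ℝ :=
  sInf (Set.image2 dist S A)

/-- The `f`-enlargement of a set `S`: `⋃ x ∈ S, B(x, f x)`. -/
def fEnl {X : Type*} [MetricSpace X] (S : Set X) (f : X → ℝ) : Set X :=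
  ⋃ x ∈ S, ball x (f x)

/-!
`τ⁺ ⇒ G⁺`: `D(S₀,A) ≤ d(s,A)` for `s ∈ S₀`, so `d(x,A) - d(x,Aᵢ) < ε` on `S₀` gives
`D(S₀,Aᵢ) ≥ D(S₀,A) - ε`.

`G⁺ ⇒ τ⁺`: only the points `x ∈ S₀` with `d(x,A) ≥ ε` matter; call them `T`. The enlargement
of `T` by radii `d(x,A) - ε/2` stays `ε/2` away from `A`, so its closure misses `A` and the
hypothesis puts it in the bornology, with positive gap to `A`. `G⁺`-convergence then makes `Aᵢ`
eventually disjoint from the enlargement, i.e. `d(x,Aᵢ) ≥ d(x,A) - ε/2` on `T`.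
-/

namespace Metric

variable {X : Type*} [MetricSpace X] {S A C : Set X}

lemma gapD_le_dist {s a : X} (hs : s ∈ S) (ha : a ∈ A) : gapD S A ≤ dist s a :=
  csInf_le ⟨0, by rintro r ⟨s, -, a, -, rfl⟩; exact dist_nonneg⟩ ⟨s, hs, a, ha, rfl⟩

lemma le_gapD {b : ℝ} (hS : S.Nonempty) (hA : A.Nonempty)
    (h : ∀ s ∈ S, ∀ a ∈ A, b ≤ dist s a) : b ≤ gapD S A :=
  le_csInf (hS.image2 hA) <| by rintro r ⟨s, hs, a, ha, rfl⟩; exact h s hs a ha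

lemma gapD_le_infDist {s : X} (hs : s ∈ S) (hA : A.Nonempty) : gapD S A ≤ infDist s A :=
  (le_infDist hA).2 fun _ ha => gapD_le_dist hs ha

lemma disjoint_of_gapD_pos (h : 0 < gapD S C) : Disjoint S C :=
  Set.disjoint_left.2 fun x hS hC => (gapD_le_dist hS hC).not_gt (by rwa [dist_self])

lemma gapD_sub_le_of_forall_infDist_sub_le {ε : ℝ} (hA : A.Nonempty) (hS : S.Nonempty)
    (hC : C.Nonempty) (h : ∀ x ∈ S, infDist x A - infDist x C ≤ ε) :
    gapD S A - ε ≤ gapD S C :=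
  le_gapD hS hC fun s hs c hc => by
    linarith [gapD_le_infDist (A := A) hs hA, h s hs, infDist_le_dist_of_mem (x := s) hc]

lemma le_infDist_of_disjoint_fEnl {T : Set X} {f : X → ℝ} {x : X} (hx : x ∈ T)
    (h : Disjoint (fEnl T f) C) (hC : C.Nonempty) : f x ≤ infDist x C :=
  (le_infDist hC).2 fun _ hc => not_lt.1 fun hlt =>
    Set.disjoint_left.1 h (Set.mem_biUnion hx (mem_ball'.2 hlt)) hc

lemma lt_infDist_of_mem_fEnl {T : Set X} {f : X → ℝ} {δ : ℝ}
    (hf : ∀ x ∈ T, f x ≤ infDist x A - δ) {y : X} (hy : y ∈ fEnl T f) :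
    δ < infDist y A := by
  obtain ⟨x, hx, hxy⟩ := Set.mem_iUnion₂.1 hy
  linarith [hf x hx, mem_ball'.1 hxy, infDist_le_infDist_add_dist (x := x) (y := y) (s := A)]

lemma closure_ne_univ_of_le_infDist {E : Set X} {δ : ℝ} (hδ : 0 < δ) (hA : A.Nonempty)
    (h : ∀ y ∈ E, δ ≤ infDist y A) : closure E ≠ Set.univ := by
  obtain ⟨a, ha⟩ := hA
  have hcl : closure E ⊆ {y | δ ≤ infDist y A} :=
    closure_minimal h (isClosed_le continuous_const (continuous_infDist_pt A))
  intro huniv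
  have : δ ≤ infDist a A := hcl (huniv ▸ Set.mem_univ a)
  rw [infDist_zero_of_mem ha] at this
  linarith

end Metric

theorem tauPlus_eq_gapPlus_of_enlargement_condition_general {X : Type*} [MetricSpace X]
    (B : Set (Set X))
    (hne : ∀ s ∈ B, s.Nonempty)
    (hered : ∀ s ∈ B, ∀ t, t ⊆ s → t.Nonempty → t ∈ B)
    (hcond : ∀ S₀ ∈ B, ∀ f : X → ℝ, (∀ x, 0 < f x) →
      fEnl S₀ f ∈ B ∨ closure (fEnl S₀ f) = Set.univ)
    {ι : Type*} (l : Filter ι) (An : ι → Set X) (A : Set X)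
    (hAnne : ∀ i, (An i).Nonempty)
    (hAne : A.Nonempty) :
    (∀ S₀ ∈ B, ∀ ε > 0, ∀ᶠ i in l, ∀ x ∈ S₀,
        infDist x A - infDist x (An i) < ε) ↔
    (∀ S₀ ∈ B, ∀ α : ℝ, α < gapD S₀ A → ∀ᶠ i in l, α < gapD S₀ (An i)) := by
  refine ⟨fun h S₀ hS₀ α hα => ?_, fun h S₀ hS₀ ε hε => ?_⟩
  · filter_upwards [h S₀ hS₀ _ (half_pos (sub_pos.2 hα))] with i hi
    linarith [gapD_sub_le_of_forall_infDist_sub_le hAne (hne S₀ hS₀) (hAnne i)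
      fun x hx => (hi x hx).le]
  set T := {x ∈ S₀ | ε ≤ infDist x A}
  have hnear : ∀ x ∈ S₀, x ∉ T → ∀ i, infDist x A - infDist x (An i) < ε :=
    fun x hx hxT i => by
      linarith [not_le.1 fun h' => hxT ⟨hx, h'⟩, infDist_nonneg (x := x) (s := An i)]
  rcases T.eq_empty_or_nonempty with hT | hT
  · exact Eventually.of_forall fun i x hx => hnear x hx (hT ▸ Set.notMem_empty x) i
  -- the floor `ε / 2` only serves to make `f` positive off `T`
  set f : X → ℝ := fun x => max (infDist x A - ε / 2) (ε / 2)
  have hfT : ∀ x ∈ T, f x ≤ infDist x A - ε / 2 := fun x hx => max_le le_rfl (by linarith [hx.2])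
  have hEA : ∀ y ∈ fEnl T f, ε / 2 ≤ infDist y A := fun y hy => (lt_infDist_of_mem_fEnl hfT hy).le
  have hEB : fEnl T f ∈ B :=
    (hcond T (hered S₀ hS₀ T (Set.sep_subset _ _) hT) f fun x => lt_max_of_lt_right (half_pos hε))
      |>.resolve_right (closure_ne_univ_of_le_infDist (half_pos hε) hAne hEA)
  have hgap : 0 < gapD (fEnl T f) A :=
    (half_pos hε).trans_le <| le_gapD (hne _ hEB) hAne fun y hy a ha =>
      (hEA y hy).trans (infDist_le_dist_of_mem ha)
  filter_upwards [h _ hEB 0 hgap] with i hi x hx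
  by_cases hxT : x ∈ T
  · linarith [le_infDist_of_disjoint_fEnl hxT (disjoint_of_gapD_pos hi) (hAnne i),
      le_max_left (infDist x A - ε / 2) (ε / 2)]
  · exact hnear x hx hxT i

theorem tauPlus_eq_gapPlus_of_enlargement_condition {X : Type*} [MetricSpace X]
    (B : Set (Set X))
    (hne : ∀ s ∈ B, s.Nonempty)
    (hcov : ∀ x : X, ∃ s ∈ B, x ∈ s)
    (hered : ∀ s ∈ B, ∀ t, t ⊆ s → t.Nonempty → t ∈ B)
    (hunion : ∀ s ∈ B, ∀ t ∈ B, s ∪ t ∈ B)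
    (hcond : ∀ S₀ ∈ B, ∀ f : X → ℝ, (∀ x, 0 < f x) →
      fEnl S₀ f ∈ B ∨ closure (fEnl S₀ f) = Set.univ)
    {ι : Type*} (l : Filter ι) (An : ι → Set X) (A : Set X)
    (hAnc : ∀ i, IsClosed (An i)) (hAnne : ∀ i, (An i).Nonempty)
    (hAc : IsClosed A) (hAne : A.Nonempty) :
    (∀ S₀ ∈ B, ∀ ε > 0, ∀ᶠ i in l, ∀ x ∈ S₀,
        infDist x A - infDist x (An i) < ε) ↔
    (∀ S₀ ∈ B, ∀ α : ℝ, α < gapD S₀ A → ∀ᶠ i in l, α < gapD S₀ (An i)) :=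
  tauPlus_eq_gapPlus_of_enlargement_condition_general B hne hered hcond l An A hAnne hAne
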